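/- Let k : [0,1] × [0,∞) → ℝ be continuous, and suppose there is a continuous function K : [0,1] × ℝ → ℝ with K(x₁, x₂+1) = K(x₁, x₂) for all (x₁,x₂), ∫₀¹∫₀¹ K(x₁,x₂) dx₂ dx₁ = 0, and ∫₀¹ ∫₀^∞ |k(x₁,x₂) − K(x₁,x₂)| dx₂ dx₁ < ∞. Then for every g ∈ C¹([0,1]) with g(0) = 1 and g(1) = 0, the limit lim_{L→∞} ∫₀¹ ∫₀^L g(x₂/L) k(x₁,x₂) dx₂ dx₁ exists and equals ∫₀¹ ∫₀^∞ (k(x₁,x₂) − K(x₁,x₂)) dx₂ dx₁ − ∫₀¹ ∫₀¹ x₂ K(x₁,x₂) dx₂ dx₁; in particular the limit is independent of g. -/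

import Mathlib

open MeasureTheory Filter Set intervalIntegral

/-!
Split `k = (k - K) + K`. As `k - K` is integrable on the strip and the cutoff `g (x₂ / L)` is
bounded and tends to `1` pointwise, dominated convergence gives the first term. By Fubini, the
bulk term only sees the profile `Q t = ∫₀¹ K (x₁, t) dx₁`, which is periodic with mean zero, so
its primitive `P` is periodic. Rescaling `t = L u` and integrating by parts,
`∫₀ᴸ g (t / L) Q t dt = -∫₀¹ g' u P (L u) du`. The rescaled functions `P (L ·)` converge weakly
to their mean `∫₀¹ P = -∫₀¹ t Q t dt` (integrate by parts once more against a polynomial, then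
use Weierstrass approximation), and `∫₀¹ g' = -1`, so the limit is `-∫₀¹ t Q t dt` whatever `g`.
-/

section Box

variable {f g : ℝ × ℝ → ℝ} {a b c d : ℝ}

lemma ContinuousOn.integrable_prod_restrict_Ioc (hf : ContinuousOn f (Icc a b ×ˢ Icc c d)) :
    Integrable f ((volume.restrict (Ioc a b)).prod (volume.restrict (Ioc c d))) := by
  rw [Measure.prod_restrict, ← Measure.volume_eq_prod]
  exact (hf.integrableOn_compact (isCompact_Icc.prod isCompact_Icc)).mono_set
    (prod_mono Ioc_subset_Icc_self Ioc_subset_Icc_self)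

lemma intervalIntegral.integral_integral_swap_of_continuousOn (hab : a ≤ b) (hcd : c ≤ d)
    (hf : ContinuousOn f (Icc a b ×ˢ Icc c d)) :
    ∫ x in a..b, ∫ y in c..d, f (x, y) = ∫ y in c..d, ∫ x in a..b, f (x, y) := by
  simp only [integral_of_le hab, integral_of_le hcd]
  exact integral_integral_swap hf.integrable_prod_restrict_Ioc

lemma intervalIntegral.intervalIntegrable_integral_of_continuousOn (hab : a ≤ b) (hcd : c ≤ d)
    (hf : ContinuousOn f (Icc a b ×ˢ Icc c d)) :
    IntervalIntegrable (fun x => ∫ y in c..d, f (x, y)) volume a b := by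
  rw [intervalIntegrable_iff_integrableOn_Ioc_of_le hab]
  simp only [integral_of_le hcd]
  exact hf.integrable_prod_restrict_Ioc.integral_prod_left

lemma intervalIntegral.integral_integral_add_of_continuousOn (hab : a ≤ b) (hcd : c ≤ d)
    (hf : ContinuousOn f (Icc a b ×ˢ Icc c d))
    (hg : ContinuousOn g (Icc a b ×ˢ Icc c d)) :
    ∫ x in a..b, ∫ y in c..d, (f (x, y) + g (x, y))
      = (∫ x in a..b, ∫ y in c..d, f (x, y)) + ∫ x in a..b, ∫ y in c..d, g (x, y) := by
  have hslice : ∀ {h : ℝ × ℝ → ℝ}, ContinuousOn h (Icc a b ×ˢ Icc c d) → ∀ x ∈ Icc a b,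
      IntervalIntegrable (fun y => h (x, y)) volume c d := fun hh x hx =>
    (hh.comp (continuous_const.prodMk continuous_id).continuousOn
      fun y hy => ⟨hx, hy⟩).intervalIntegrable_of_Icc hcd
  rw [← integral_add (intervalIntegrable_integral_of_continuousOn hab hcd hf)
    (intervalIntegrable_integral_of_continuousOn hab hcd hg)]
  refine integral_congr fun x hx => ?_
  rw [uIcc_of_le hab] at hx
  exact integral_add (hslice hf x hx) (hslice hg x hx)

end Box

lemma Function.Periodic.periodic_primitive_of_integral_eq_zero {p : ℝ → ℝ} {T : ℝ}
    (hp : Function.Periodic p T) (hint : ∀ a b, IntervalIntegrable p volume a b)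
    (hT : ∫ s in (0:ℝ)..T, p s = 0) :
    Function.Periodic (fun u => ∫ s in (0:ℝ)..u, p s) T := fun u => by
  simp only [hp.intervalIntegral_add_eq_add 0 u hint, zero_add, hT, add_zero]

lemma Function.Periodic.exists_forall_abs_le {p : ℝ → ℝ} {T : ℝ} (hp : Function.Periodic p T)
    (hT : T ≠ 0) (hc : Continuous p) : ∃ C, ∀ x, |p x| ≤ C := by
  obtain ⟨C, hC⟩ := isBounded_iff_forall_norm_le.1 (hp.isBounded_of_continuous hT hc)
  exact ⟨C, fun x => hC _ (mem_range_self x)⟩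

lemma hasDerivAt_inv_mul_primitive_comp_mul {p : ℝ → ℝ} (hp : Continuous p) {L : ℝ}
    (hL : L ≠ 0) (u : ℝ) :
    HasDerivAt (fun w => L⁻¹ * ∫ s in (0:ℝ)..L * w, p s) (p (L * u)) u := by
  have h := ((integral_hasDerivAt_right (hp.intervalIntegrable 0 _)
    hp.stronglyMeasurable.stronglyMeasurableAtFilter hp.continuousAt).comp u
    ((hasDerivAt_id u).const_mul L)).const_mul L⁻¹
  rwa [mul_one, mul_comm _ L, ← mul_assoc, inv_mul_cancel₀ hL, one_mul] at h

lemma tendsto_integral_mul_comp_mul_of_hasDerivAt {ψ ψ' p : ℝ → ℝ}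
    (hψ : ∀ x, HasDerivAt ψ (ψ' x) x) (hψ' : Continuous ψ') (hp : Continuous p)
    (hper : Function.Periodic p 1) (hmean : ∫ s in (0:ℝ)..1, p s = 0) :
    Tendsto (fun L => ∫ u in (0:ℝ)..1, ψ u * p (L * u)) atTop (nhds 0) := by
  set q : ℝ → ℝ := fun u => ∫ s in (0:ℝ)..u, p s
  have hq : Continuous q := continuous_primitive hp.intervalIntegrable 0
  obtain ⟨C, hC⟩ := (hper.periodic_primitive_of_integral_eq_zero hp.intervalIntegrable
    hmean).exists_forall_abs_le one_ne_zero hq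
  obtain ⟨D, hD⟩ := (isCompact_Icc (a := (0:ℝ)) (b := 1)).exists_bound_of_continuousOn
    hψ'.continuousOn
  refine squeeze_zero_norm' ?_ (by simpa using
    (tendsto_inv_atTop_zero (𝕜 := ℝ)).const_mul ((|ψ 1| + |ψ 0| + D) * C))
  filter_upwards [eventually_gt_atTop 0] with L hL
  have hv : ∀ u, |L⁻¹ * q (L * u)| ≤ L⁻¹ * C := fun u => by
    rw [abs_mul, abs_of_pos (inv_pos.2 hL)]
    exact mul_le_mul_of_nonneg_left (hC _) (inv_pos.2 hL).le
  rw [integral_mul_deriv_eq_deriv_mul (fun x _ => hψ x)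
    (fun x _ => hasDerivAt_inv_mul_primitive_comp_mul hp hL.ne' x) (hψ'.intervalIntegrable 0 1)
    ((hp.comp (continuous_const_mul L)).intervalIntegrable 0 1)]
  have hI : ‖∫ u in (0:ℝ)..1, ψ' u * (L⁻¹ * q (L * u))‖ ≤ D * (L⁻¹ * C) * |1 - 0| :=
    norm_integral_le_of_norm_le_const fun u hu => by
      rw [uIoc_of_le zero_le_one] at hu
      rw [norm_mul]
      exact mul_le_mul (hD u (Ioc_subset_Icc_self hu)) (hv u) (abs_nonneg _)
        ((norm_nonneg _).trans (hD u (Ioc_subset_Icc_self hu)))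
  calc _ ≤ |ψ 1| * |L⁻¹ * q (L * 1)| + |ψ 0| * |L⁻¹ * q (L * 0)|
        + ‖∫ u in (0:ℝ)..1, ψ' u * (L⁻¹ * q (L * u))‖ := by
        simp only [Real.norm_eq_abs, ← abs_mul]
        exact (abs_sub _ _).trans (add_le_add_left (abs_sub _ _) _)
    _ ≤ |ψ 1| * (L⁻¹ * C) + |ψ 0| * (L⁻¹ * C) + D * (L⁻¹ * C) * |1 - 0| := by
        gcongr <;> exact hv _
    _ = (|ψ 1| + |ψ 0| + D) * C * L⁻¹ := by norm_num; ring

lemma tendsto_integral_mul_comp_mul_of_continuousOn {φ p : ℝ → ℝ}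
    (hφ : ContinuousOn φ (Icc 0 1)) (hp : Continuous p) (hper : Function.Periodic p 1)
    (hmean : ∫ s in (0:ℝ)..1, p s = 0) :
    Tendsto (fun L => ∫ u in (0:ℝ)..1, φ u * p (L * u)) atTop (nhds 0) := by
  obtain ⟨C, hC⟩ := hper.exists_forall_abs_le one_ne_zero hp
  have hC0 : 0 ≤ C := (abs_nonneg _).trans (hC 0)
  rw [Metric.tendsto_nhds]
  intro ε hε
  set δ := ε / (2 * (C + 1))
  obtain ⟨ψ, hψ⟩ := exists_polynomial_near_of_continuousOn 0 1 φ hφ δ (by positivity)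
  have hψlim := tendsto_integral_mul_comp_mul_of_hasDerivAt (fun x => ψ.hasDerivAt x)
    ψ.derivative.continuous hp hper hmean
  filter_upwards [Metric.tendsto_nhds.1 hψlim (ε / 2) (half_pos hε)] with L hL
  have hpL : Continuous fun u => p (L * u) := hp.comp (continuous_const_mul L)
  have happrox : ‖∫ u in (0:ℝ)..1, (φ u - ψ.eval u) * p (L * u)‖ ≤ δ * C * |1 - 0| :=
    norm_integral_le_of_norm_le_const fun u hu => by
      rw [uIoc_of_le zero_le_one] at hu
      rw [norm_mul, Real.norm_eq_abs, abs_sub_comm]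
      exact mul_le_mul (hψ u (Ioc_subset_Icc_self hu)).le (hC _) (abs_nonneg _) (by positivity)
  have hδ : δ * C ≤ ε / 2 := by
    rw [div_mul_eq_mul_div, div_le_div_iff₀ (by positivity) two_pos]
    nlinarith
  have hsplit : ∫ u in (0:ℝ)..1, φ u * p (L * u)
      = (∫ u in (0:ℝ)..1, (φ u - ψ.eval u) * p (L * u))
        + ∫ u in (0:ℝ)..1, ψ.eval u * p (L * u) := by
    have hdiff : IntervalIntegrable (fun u => (φ u - ψ.eval u) * p (L * u)) volume 0 1 :=
      ((hφ.sub ψ.continuous.continuousOn).mul hpL.continuousOn).intervalIntegrable_of_Icc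
        zero_le_one
    have hpoly : IntervalIntegrable (fun u => ψ.eval u * p (L * u)) volume 0 1 :=
      (ψ.continuous.mul hpL).intervalIntegrable 0 1
    rw [← integral_add hdiff hpoly]
    exact integral_congr fun u _ => by ring
  rw [dist_zero_right] at hL
  rw [dist_zero_right, hsplit]
  calc _ ≤ _ := norm_add_le _ _
    _ < δ * C * |1 - 0| + ε / 2 := add_lt_add_of_le_of_lt happrox hL
    _ ≤ ε := by norm_num; linarith

lemma tendsto_integral_mul_comp_mul_of_periodic {φ p : ℝ → ℝ}
    (hφ : ContinuousOn φ (Icc 0 1)) (hp : Continuous p) (hper : Function.Periodic p 1) :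
    Tendsto (fun L => ∫ u in (0:ℝ)..1, φ u * p (L * u)) atTop
      (nhds ((∫ u in (0:ℝ)..1, φ u) * ∫ s in (0:ℝ)..1, p s)) := by
  set m := ∫ s in (0:ℝ)..1, p s
  have hφi : IntervalIntegrable φ volume 0 1 := hφ.intervalIntegrable_of_Icc zero_le_one
  have hfluct := tendsto_integral_mul_comp_mul_of_continuousOn (p := fun s => p s - m) hφ
    (hp.sub continuous_const) (fun s => by simp only [hper s])
    (by simp [integral_sub (hp.intervalIntegrable 0 1) intervalIntegrable_const, m])
  have hsplit : ∀ L, (∫ u in (0:ℝ)..1, φ u) * m + ∫ u in (0:ℝ)..1, φ u * (p (L * u) - m)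
      = ∫ u in (0:ℝ)..1, φ u * p (L * u) := fun L => by
    have hpL : Continuous fun u => p (L * u) - m :=
      (hp.comp (continuous_const_mul L)).sub continuous_const
    rw [← intervalIntegral.integral_mul_const, ← integral_add (hφi.mul_const m)
      (hφi.mul_continuousOn hpL.continuousOn)]
    exact integral_congr fun u _ => by ring
  refine Tendsto.congr hsplit ?_
  simpa using hfluct.const_add ((∫ u in (0:ℝ)..1, φ u) * m)

lemma tendsto_integral_cutoff_mul_periodic {G φ Q : ℝ → ℝ} (hG : ∀ x, HasDerivAt G (φ x) x)
    (hφ : Continuous φ) (hG0 : G 0 = 1) (hG1 : G 1 = 0) (hQ : Continuous Q)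
    (hper : Function.Periodic Q 1) (hmean : ∫ t in (0:ℝ)..1, Q t = 0) :
    Tendsto (fun L => ∫ t in (0:ℝ)..L, G (t / L) * Q t) atTop
      (nhds (-∫ t in (0:ℝ)..1, t * Q t)) := by
  set P : ℝ → ℝ := fun u => ∫ s in (0:ℝ)..u, Q s
  have hP : Continuous P := continuous_primitive hQ.intervalIntegrable 0
  have hφint : ∫ u in (0:ℝ)..1, φ u = -1 := by
    rw [integral_eq_sub_of_hasDerivAt (fun x _ => hG x) (hφ.intervalIntegrable 0 1), hG0, hG1]
    norm_num
  have hmoment : ∫ t in (0:ℝ)..1, t * Q t = -∫ t in (0:ℝ)..1, P t := by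
    have h := integral_mul_deriv_eq_deriv_mul (fun t _ => hasDerivAt_id t)
      (fun t _ => hQ.integral_hasStrictDerivAt 0 t |>.hasDerivAt)
      (intervalIntegrable_const (c := (1:ℝ))) (hQ.intervalIntegrable 0 1)
    simpa [P, hmean] using h
  have hrescale : ∀ L > 0,
      ∫ t in (0:ℝ)..L, G (t / L) * Q t = -∫ u in (0:ℝ)..1, φ u * P (L * u) := by
    intro L hL
    have hsub := smul_integral_comp_mul_left (fun t => G (t / L) * Q t) L (a := 0) (b := 1)
    simp only [mul_zero, mul_one, mul_div_cancel_left₀ _ hL.ne', smul_eq_mul] at hsub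
    have hparts := integral_mul_deriv_eq_deriv_mul (fun x _ => hG x)
      (fun x _ => hasDerivAt_inv_mul_primitive_comp_mul hQ hL.ne' x)
      (hφ.intervalIntegrable 0 1) ((hQ.comp (continuous_const_mul L)).intervalIntegrable 0 1)
    simp only [hG1, hG0, mul_zero, integral_same, zero_mul, sub_zero, zero_sub,
      mul_left_comm _ L⁻¹, intervalIntegral.integral_const_mul] at hparts
    rw [← hsub, hparts, mul_neg, ← mul_assoc, mul_inv_cancel₀ hL.ne', one_mul]
  rw [hmoment, neg_neg]
  refine Tendsto.congr' (eventually_gt_atTop 0 |>.mono fun L hL => (hrescale L hL).symm) ?_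
  simpa [hφint] using (tendsto_integral_mul_comp_mul_of_periodic hφ.continuousOn hP
    (hper.periodic_primitive_of_integral_eq_zero hQ.intervalIntegrable hmean)).neg

lemma tendsto_integral_integral_cutoff_mul_periodic {G φ : ℝ → ℝ} {K : ℝ × ℝ → ℝ}
    (hG : ∀ x, HasDerivAt G (φ x) x) (hφ : Continuous φ) (hG0 : G 0 = 1) (hG1 : G 1 = 0)
    (hK : Continuous K) (hKper : ∀ x₁ x₂, K (x₁, x₂ + 1) = K (x₁, x₂))
    (hKavg : ∫ x₁ in (0:ℝ)..1, ∫ x₂ in (0:ℝ)..1, K (x₁, x₂) = 0) :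
    Tendsto (fun L => ∫ x₁ in (0:ℝ)..1, ∫ x₂ in (0:ℝ)..L, G (x₂ / L) * K (x₁, x₂)) atTop
      (nhds (-∫ x₁ in (0:ℝ)..1, ∫ x₂ in (0:ℝ)..1, x₂ * K (x₁, x₂))) := by
  have hGc : Continuous G := continuous_iff_continuousAt.2 fun x => (hG x).continuousAt
  have hmean : ∫ t in (0:ℝ)..1, ∫ x₁ in (0:ℝ)..1, K (x₁, t) = 0 := by
    rwa [integral_integral_swap_of_continuousOn zero_le_one zero_le_one hK.continuousOn] at hKavg
  have hcore := tendsto_integral_cutoff_mul_periodic hG hφ hG0 hG1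
    (continuous_parametric_intervalIntegral_of_continuous' (f := fun t s => K (s, t))
      (hK.comp continuous_swap) 0 1) (fun t => by simp only [hKper]) hmean
  rw [integral_integral_swap_of_continuousOn (f := fun p => p.2 * K p) zero_le_one zero_le_one
    (continuous_snd.mul hK).continuousOn]
  simp only [intervalIntegral.integral_const_mul]
  refine hcore.congr' (eventually_ge_atTop 0 |>.mono fun L hL => ?_)
  dsimp only
  rw [integral_integral_swap_of_continuousOn (f := fun p => G (p.2 / L) * K p) zero_le_one hL
    ((hGc.comp (continuous_snd.div_const L)).mul hK).continuousOn]
  simp only [intervalIntegral.integral_const_mul]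

lemma ContDiffOn.exists_hasDerivAt_eqOn_Icc {g : ℝ → ℝ} {a b : ℝ} (hab : a < b)
    (hg : ContDiffOn ℝ 1 g (Icc a b)) :
    ∃ G φ : ℝ → ℝ, Continuous φ ∧ (∀ x, HasDerivAt G (φ x) x) ∧ EqOn G g (Icc a b) := by
  set φ : ℝ → ℝ := fun t => derivWithin g (Icc a b) (projIcc a b hab.le t)
  have hφ : Continuous φ :=
    (hg.continuousOn_derivWithin (uniqueDiffOn_Icc hab) le_rfl).comp_continuous
      (continuous_subtype_val.comp continuous_projIcc) fun t => (projIcc a b hab.le t).2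
  refine ⟨fun x => g a + ∫ t in a..x, φ t, φ, hφ,
    fun x => (hφ.integral_hasStrictDerivAt a x).hasDerivAt.const_add (g a), fun x hx => ?_⟩
  have hderiv : ∀ t ∈ Ioo a x, HasDerivAt g (φ t) t := fun t ht => by
    have ht' : t ∈ Icc a b := ⟨ht.1.le, ht.2.le.trans hx.2⟩
    simp only [φ, projIcc_of_mem hab.le ht']
    exact ((hg.differentiableOn one_ne_zero t ht').hasDerivWithinAt).hasDerivAt
      (Icc_mem_nhds ht.1 (ht.2.trans_le hx.2))
  simp [integral_eq_sub_of_hasDerivAt_of_le hx.1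
    (hg.continuousOn.mono (Icc_subset_Icc_right hx.2)) hderiv (hφ.intervalIntegrable a x)]

lemma tendsto_integral_intervalIntegral_cutoff_of_integrable {α : Type*} [MeasurableSpace α]
    {μ : Measure α} [SFinite μ] {f : α × ℝ → ℝ}
    (hf : Integrable f (μ.prod (volume.restrict (Ioi 0)))) {G : ℝ → ℝ} (hG : Continuous G)
    (hG0 : G 0 = 1) :
    Tendsto (fun L => ∫ x, (∫ y in (0:ℝ)..L, G (y / L) * f (x, y)) ∂μ) atTop
      (nhds (∫ x, (∫ y in Ioi 0, f (x, y)) ∂μ)) := by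
  set ν := volume.restrict (Ioi (0:ℝ))
  obtain ⟨M, hM⟩ := (isCompact_Icc (a := (0:ℝ)) (b := 1)).exists_bound_of_continuousOn
    hG.continuousOn
  have hM0 : 0 ≤ M := (norm_nonneg _).trans (hM 0 (left_mem_Icc.2 zero_le_one))
  -- Cutting off with `Iic L` rather than `Ioc 0 L` makes `F L → f` hold at every point.
  set F : ℝ → α × ℝ → ℝ := fun L p => (Iic L).indicator (fun y => G (y / L)) p.2 * f p
  have hpos : ∀ᵐ p ∂μ.prod ν, 0 < p.2 :=
    (Measure.ae_prod_mem_iff_ae_ae_mem (measurableSet_Ioi.preimage measurable_snd)).2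
      (Eventually.of_forall fun _ => ae_restrict_mem measurableSet_Ioi)
  have hmeas : ∀ L, AEStronglyMeasurable (F L) (μ.prod ν) := fun L =>
    ((((hG.comp (continuous_id.div_const L)).measurable).indicator
      measurableSet_Iic).comp measurable_snd).aestronglyMeasurable.mul hf.aestronglyMeasurable
  have hbound : ∀ L, ∀ᵐ p ∂μ.prod ν, ‖F L p‖ ≤ M * ‖f p‖ := fun L => by
    filter_upwards [hpos] with p hp
    rw [norm_mul]
    by_cases hpL : p.2 ≤ L
    · rw [indicator_of_mem (show p.2 ∈ Iic L from hpL)]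
      exact mul_le_mul_of_nonneg_right (hM _ ⟨div_nonneg hp.le (hp.trans_le hpL).le,
        div_le_one_of_le₀ hpL (hp.trans_le hpL).le⟩) (norm_nonneg _)
    · rw [indicator_of_notMem (show p.2 ∉ Iic L from hpL), norm_zero, zero_mul]
      positivity
  have hlim : ∀ p, Tendsto (fun L => F L p) atTop (nhds (f p)) := fun p => by
    have hG' : Tendsto (fun L => G (p.2 / L)) atTop (nhds 1) :=
      hG0 ▸ (hG.tendsto 0).comp (tendsto_const_nhds.div_atTop tendsto_id)
    refine Tendsto.congr' ?_ (by simpa using hG'.mul_const (f p))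
    filter_upwards [eventually_ge_atTop p.2] with L hL
    simp only [F, indicator_of_mem (show p.2 ∈ Iic L from hL)]
  have hiter : ∀ L ≥ 0, ∫ x, (∫ y in (0:ℝ)..L, G (y / L) * f (x, y)) ∂μ = ∫ p, F L p ∂μ.prod ν :=
    fun L hL => by
    rw [integral_prod _ ((hf.norm.const_mul M).mono' (hmeas L) (hbound L))]
    refine integral_congr_ae (Eventually.of_forall fun x => ?_)
    simp only [F, ν, ← indicator_mul_left (Iic L) (fun y => G (y / L)) (fun y => f (x, y))]
    rw [setIntegral_indicator measurableSet_Iic, Ioi_inter_Iic, integral_of_le hL]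
  rw [← integral_prod f hf]
  refine Tendsto.congr' (eventually_ge_atTop 0 |>.mono fun L hL => (hiter L hL).symm) ?_
  exact tendsto_integral_filter_of_dominated_convergence _ (Eventually.of_forall hmeas)
    (Eventually.of_forall hbound) (hf.norm.const_mul M) (Eventually.of_forall hlim)

theorem total_edge_current_well_defined
    (k : ℝ × ℝ → ℝ) (hk : ContinuousOn k ((Set.Icc (0:ℝ) 1) ×ˢ (Set.Ici (0:ℝ))))
    (K : ℝ × ℝ → ℝ) (hK : Continuous K)
    (hKper : ∀ x₁ x₂ : ℝ, K (x₁, x₂ + 1) = K (x₁, x₂))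
    (hKavg : (∫ x₁ in (0:ℝ)..1, ∫ x₂ in (0:ℝ)..1, K (x₁, x₂)) = 0)
    (hint : IntegrableOn (fun p : ℝ × ℝ => k p - K p)
      ((Set.Icc (0:ℝ) 1) ×ˢ (Set.Ici (0:ℝ))))
    (g : ℝ → ℝ) (hg : ContDiffOn ℝ 1 g (Set.Icc (0:ℝ) 1))
    (hg0 : g 0 = 1) (hg1 : g 1 = 0) :
    Tendsto (fun L : ℝ => ∫ x₁ in (0:ℝ)..1, ∫ x₂ in (0:ℝ)..L, g (x₂ / L) * k (x₁, x₂))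
      atTop
      (nhds ((∫ x₁ in (0:ℝ)..1, ∫ x₂ in Set.Ioi (0:ℝ), (k (x₁, x₂) - K (x₁, x₂)))
        - ∫ x₁ in (0:ℝ)..1, ∫ x₂ in (0:ℝ)..1, x₂ * K (x₁, x₂))) := by
  obtain ⟨G, φ, hφ, hG, hGg⟩ := hg.exists_hasDerivAt_eqOn_Icc zero_lt_one
  have hG0 : G 0 = 1 := (hGg (left_mem_Icc.2 zero_le_one)).trans hg0
  have hGc : Continuous G := continuous_iff_continuousAt.2 fun x => (hG x).continuousAt
  have hedge := tendsto_integral_intervalIntegral_cutoff_of_integrable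
    (μ := volume.restrict (Ioc 0 1)) (f := fun p => k p - K p)
    (by rw [Measure.prod_restrict, ← Measure.volume_eq_prod]
        exact hint.mono_set (prod_mono Ioc_subset_Icc_self Ioi_subset_Ici_self)) hGc hG0
  have hbulk := tendsto_integral_integral_cutoff_mul_periodic hG hφ hG0
    ((hGg (right_mem_Icc.2 zero_le_one)).trans hg1) hK hKper hKavg
  simp only [← integral_of_le zero_le_one] at hedge
  rw [sub_eq_add_neg]
  refine (hedge.add hbulk).congr' (eventually_gt_atTop 0 |>.mono fun L hL => ?_)
  have hGL : Continuous fun p : ℝ × ℝ => G (p.2 / L) := hGc.comp (continuous_snd.div_const L)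
  refine (integral_integral_add_of_continuousOn (f := fun p => G (p.2 / L) * (k p - K p))
    (g := fun p => G (p.2 / L) * K p) zero_le_one hL.le
    (hGL.continuousOn.mul ((hk.mono (prod_mono subset_rfl Icc_subset_Ici_self)).sub
      hK.continuousOn)) (hGL.mul hK).continuousOn).symm.trans
    (integral_congr fun x₁ _ => integral_congr fun x₂ hx₂ => ?_)
  rw [uIcc_of_le hL.le] at hx₂
  simp only [hGg ⟨div_nonneg hx₂.1 hL.le, div_le_one_of_le₀ hx₂.2 hL.le⟩]
  ring
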